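/- arXiv:1704.02939 — 7 statements merged into one kernel-verified Lean document; each statement's English description precedes it below -/
import Mathlib

section
/- If a graph G contains an induced matching with k edges, then G has at least 2^k maximal independent sets. -/
open Set

universe u

variable {V : Type u}

/-- A set of vertices is independent if no two of its members are adjacent. -/
def IndepSet (G : SimpleGraph V) (I : Set V) : Prop :=
  I.Pairwise (fun u v => ¬ G.Adj u v)

/-- A maximal independent set of a graph. -/
def MaxIndep (G : SimpleGraph V) (I : Set V) : Prop :=
  IndepSet G I ∧ ∀ J : Set V, IndepSet G J → I ⊆ J → J = I

/-- An induced matching with `k` edges `a i b i`: the `2k` endpoints are pairwise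
distinct and the only edges of `G` between them are the matching edges themselves. -/
def IsInducedMatching (G : SimpleGraph V) (k : ℕ) (a b : Fin k → V) : Prop :=
  (∀ i, G.Adj (a i) (b i)) ∧
  ∀ i j, i ≠ j → ∀ x ∈ ({a i, b i} : Set V), ∀ y ∈ ({a j, b j} : Set V),
    x ≠ y ∧ ¬ G.Adj x y

/-- `μ_G(S)`: maximum size of an induced matching each of whose edges meets `S`. -/
noncomputable def muS (G : SimpleGraph V) (S : Set V) : ℕ :=
  sSup {k | ∃ a b : Fin k → V, IsInducedMatching G k a b ∧ ∀ i, a i ∈ S ∨ b i ∈ S}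

/-- `α_G(S)`: maximum size of an independent set contained in `S`. -/
noncomputable def alphaS (G : SimpleGraph V) (S : Set V) : ℕ :=
  sSup {n | ∃ I : Set V, I ⊆ S ∧ IndepSet G I ∧ I.ncard = n}

/-- The trace (restriction) of a set family on `S`. -/
def trace (S : Set V) (F : Set (Set V)) : Set (Set V) :=
  (fun I => I ∩ S) '' F

/-- A hypergraph (given by its edge set) is a clutter if no edge properly contains another. -/
def IsClutter (E : Set (Set V)) : Prop := ∀ h ∈ E, ∀ f ∈ E, f ⊆ h → f = h

/-- A transversal of a hypergraph: a set meeting every edge. -/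
def IsTransversal (E : Set (Set V)) (T : Set V) : Prop := ∀ h ∈ E, (T ∩ h).Nonempty

/-- The blocker: the clutter of all inclusion-wise minimal transversals. -/
def blocker (E : Set (Set V)) : Set (Set V) :=
  {T | IsTransversal E T ∧ ∀ T' ⊆ T, IsTransversal E T' → T' = T}

/-- Inclusion-wise minimal members of a family of sets. -/
def minEdges (F : Set (Set V)) : Set (Set V) := {h ∈ F | ∀ f ∈ F, f ⊆ h → f = h}

/-- Deletion of a vertex from a clutter. -/
def del (E : Set (Set V)) (v : V) : Set (Set V) := {h ∈ E | v ∉ h}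

/-- Contraction of a vertex in a clutter. -/
def contr (E : Set (Set V)) (v : V) : Set (Set V) :=
  minEdges ((fun h => h \ {v}) '' E)

/-- Contraction of a set of vertices in a clutter. -/
def contrSet (E : Set (Set V)) (B : Set V) : Set (Set V) :=
  minEdges ((fun h => h \ B) '' E)

/-- Join of two clutters: minimal elements of the union of the edge sets. -/
def cJoin (E F : Set (Set V)) : Set (Set V) := minEdges (E ∪ F)

/-- Meet of two clutters: minimal elements of pairwise unions of edges. -/
def cMeet (E F : Set (Set V)) : Set (Set V) :=
  minEdges {s | ∃ h ∈ E, ∃ f ∈ F, s = h ∪ f}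

/-- `H ∘ (h, u, v) = H[u; h∖{u}] ∨ H[v; h∖{v}]`. -/
def cOp (E : Set (Set V)) (h : Set V) (u v : V) : Set (Set V) :=
  cJoin (contrSet (del E u) (h \ {u})) (contrSet (del E v) (h \ {v}))

/-- An independent (stable) set of a hypergraph: contains no edge. -/
def HIndep (E : Set (Set V)) (I : Set V) : Prop := ∀ h ∈ E, ¬ h ⊆ I

/-- A maximal independent set of a hypergraph. -/
def MaxHIndep (E : Set (Set V)) (I : Set V) : Prop :=
  HIndep E I ∧ ∀ J : Set V, HIndep E J → I ⊆ J → J = I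

/-- The Gaifman graph of a hypergraph. -/
def gaif (E : Set (Set V)) : SimpleGraph V :=
  SimpleGraph.fromRel (fun u v => ∃ h ∈ E, u ∈ h ∧ v ∈ h)

/-- A well-behaved hypergraph width measure. -/
structure WellBehaved (lam : Set (Set V) → Set V → ℚ) : Prop where
  one : ∀ (E : Set (Set V)) (x : V), 1 ≤ lam E {x}
  subadd : ∀ (E : Set (Set V)) (S T : Set V), lam E (S ∪ T) ≤ lam E S + lam E T
  add : ∀ (E : Set (Set V)) (S T : Set V), Disjoint S T →
    (∀ s ∈ S, ∀ t ∈ T, ¬ (gaif E).Adj s t) → lam E (S ∪ T) = lam E S + lam E T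
  mono : ∀ (E F : Set (Set V)) (S T : Set V), E ⊆ F → S ⊆ T → lam F S ≤ lam E T

/-- `(T, bag)` is a tree decomposition of `G`. -/
structure IsTreeDecomp {ι : Type} (G : SimpleGraph V) (T : SimpleGraph ι)
    (bag : ι → Set V) : Prop where
  conn : T.Connected
  acyclic : T.IsAcyclic
  edge_cover : ∀ ⦃u v : V⦄, G.Adj u v → ∃ t, u ∈ bag t ∧ v ∈ bag t
  vert_conn : ∀ v : V, (T.induce {t | v ∈ bag t}).Connected

/-- The `λ`-treewidth of `G` for a width measure `lam` on bags. -/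
noncomputable def lamTW (G : SimpleGraph V) (lam : Set V → ℕ) : ℕ :=
  sInf {k | ∃ (ι : Type) (T : SimpleGraph ι) (bag : ι → Set V),
    IsTreeDecomp G T bag ∧ ∀ t, lam (bag t) ≤ k}

/-- `M(G)`: attach a pendant vertex to every vertex of `G`. -/
def pend (G : SimpleGraph V) : SimpleGraph (V ⊕ V) :=
  SimpleGraph.fromRel (fun x y =>
    match x, y with
    | Sum.inl u, Sum.inl v => G.Adj u v
    | Sum.inl u, Sum.inr v => u = v
    | _, _ => False)

/-- `L²(G)`: vertices are the edges of `G`; two distinct edges are adjacent iff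
their union induces a connected subgraph. -/
def L2 (G : SimpleGraph V) : SimpleGraph G.edgeSet :=
  SimpleGraph.fromRel (fun e f =>
    ∃ x ∈ (e : Sym2 V), ∃ y ∈ (f : Sym2 V), x = y ∨ G.Adj x y)

/-- The Gaifman graph with a set `S` of vertices removed (vertices of `S` become isolated). -/
def gaifMinus (E : Set (Set V)) (S : Set V) : SimpleGraph V :=
  SimpleGraph.fromRel (fun u v => (gaif E).Adj u v ∧ u ∉ S ∧ v ∉ S)

/-- `S` is an `(A, B)`-separator: `A ∩ B ⊆ S` and every walk from `A` to `B` meets `S`. -/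
def IsSeparator (G : SimpleGraph V) (A B S : Set V) : Prop :=
  A ∩ B ⊆ S ∧ ∀ a ∈ A, ∀ b ∈ B, ∀ p : G.Walk a b, ∃ x ∈ p.support, x ∈ S

/-- Minors of clutters: obtained by repeated deletions and contractions. -/
inductive IsMinor : Set (Set V) → Set (Set V) → Prop
  | refl (E : Set (Set V)) : IsMinor E E
  | delStep {F E : Set (Set V)} (v : V) : IsMinor F E → IsMinor (del F v) E
  | contrStep {F E : Set (Set V)} (v : V) : IsMinor F E → IsMinor (contr F v) E


/-!
Choosing one endpoint from each of the `k` matching edges gives `2^k` vertex sets, each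
independent because the matching is induced. Extend each one to a maximal independent set.
Two different choices disagree on some edge, and an independent set cannot contain both of its
endpoints, so the `2^k` extensions are pairwise distinct.
-/

theorem IndepSet.exists_maxIndep_superset {G : SimpleGraph V} {S : Set V} (hS : IndepSet G S) :
    ∃ M, S ⊆ M ∧ MaxIndep G M := by
  obtain ⟨M, hSM, hM⟩ := zorn_subset_nonempty {J | IndepSet G J}
    (fun c hcI hc _ => ⟨⋃₀ c, hc.pairwise_sUnion.2 hcI, fun _ => subset_sUnion_of_mem⟩) S hS
  exact ⟨M, hSM, hM.1, fun J hJ hMJ => (hM.eq_of_subset hJ hMJ).symm⟩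

def selectEndpoint {k : ℕ} (a b : Fin k → V) (f : Fin k → Bool) (i : Fin k) : V :=
  cond (f i) (a i) (b i)

lemma selectEndpoint_mem_pair {k : ℕ} (a b : Fin k → V) (f : Fin k → Bool) (i : Fin k) :
    selectEndpoint a b f i ∈ ({a i, b i} : Set V) := by
  unfold selectEndpoint
  cases f i <;> simp

lemma IsInducedMatching.indepSet_range_selectEndpoint {G : SimpleGraph V} {k : ℕ}
    {a b : Fin k → V} (h : IsInducedMatching G k a b) (f : Fin k → Bool) :
    IndepSet G (range (selectEndpoint a b f)) := by
  rintro _ ⟨i, rfl⟩ _ ⟨j, rfl⟩ hne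
  have hij : i ≠ j := by rintro rfl; exact hne rfl
  exact (h.2 i j hij _ (selectEndpoint_mem_pair a b f i) _ (selectEndpoint_mem_pair a b f j)).2

lemma eq_of_range_selectEndpoint_subset {G : SimpleGraph V} {k : ℕ} {a b : Fin k → V}
    (hab : ∀ i, G.Adj (a i) (b i)) {M : Set V} (hM : IndepSet G M) {f g : Fin k → Bool}
    (hf : range (selectEndpoint a b f) ⊆ M) (hg : range (selectEndpoint a b g) ⊆ M) : f = g := by
  funext i
  have hfi := hf (mem_range_self i)
  have hgi := hg (mem_range_self i)
  cases hfi' : f i <;> cases hgi' : g i <;>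
    simp only [selectEndpoint, hfi', hgi', cond_true, cond_false] at hfi hgi
  · rfl
  · exact (hM hgi hfi (hab i).ne (hab i)).elim
  · exact (hM hfi hgi (hab i).ne (hab i)).elim
  · rfl

/-- a graph containing an induced matching with `k` edges has at
least `2^k` maximal independent sets. -/
theorem stmt_0 {V : Type} [Fintype V] (G : SimpleGraph V) (k : ℕ)
    (a b : Fin k → V) (h : IsInducedMatching G k a b) :
    2 ^ k ≤ {I : Set V | MaxIndep G I}.ncard := by
  choose M hsub hmax using fun f => (h.indepSet_range_selectEndpoint f).exists_maxIndep_superset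
  have hinj : Function.Injective M := fun f g hfg =>
    eq_of_range_selectEndpoint_subset h.1 (hmax g).1 (hfg ▸ hsub f) (hsub g)
  calc 2 ^ k = (range M).ncard := by simp [ncard_range_of_injective hinj]
    _ ≤ _ := ncard_le_ncard (range_subset_iff.2 hmax)
end

section
/- Let H be a clutter, T a minimal transversal of H, S ⊆ V(H), and x a vertex of H. Then either (i) there exists a minimal transversal T' ⊆ T \ {x} of H \ x such that T' ∩ S = (T \ {x}) ∩ S; or (ii) there exist a vertex z ∈ S \ {x} and an edge h of H with x ∈ h, h ∩ T = {z}, and T \ {z} is a minimal transversal of H ∘ (h, x, z). -/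
open Set

universe u

variable {V : Type u}

/-! A minimal transversal `T` has a private edge at each of its vertices. Either every
transversal of `H \ x` inside `T \ {x}` keeps all of `(T \ {x}) ∩ S`, and then any minimal one
gives (i); or some `z ∈ S \ {x}` can be dropped, i.e. `T \ {z}` still meets every edge avoiding
`x`. The private edge `h` of `z` must then contain `x`, and `T \ {z}` avoids `h`, so it meets every
edge of both contractions in `H ∘ (h, x, z)`; the private edges of the other vertices of `T`,
with `h \ {z}` removed, keep them private, which gives (ii). -/

lemma IsTransversal.mono {E : Set (Set V)} {T T' : Set V} (hT : IsTransversal E T)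
    (hTT' : T ⊆ T') : IsTransversal E T' :=
  fun h hh => (hT h hh).mono (inter_subset_inter_left h hTT')

lemma isTransversal_union_iff {E F : Set (Set V)} {T : Set V} :
    IsTransversal (E ∪ F) T ↔ IsTransversal E T ∧ IsTransversal F T := by
  simp only [IsTransversal, mem_union, or_imp, forall_and]

lemma IsTransversal.del_sdiff {E : Set (Set V)} {T : Set V} (hT : IsTransversal E T) (x : V) :
    IsTransversal (del E x) (T \ {x}) := by
  rintro h ⟨hhE, hxh⟩
  obtain ⟨t, htT, hth⟩ := hT h hhE
  exact ⟨t, ⟨htT, by rintro rfl; exact hxh hth⟩, hth⟩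

lemma IsTransversal.image_sdiff {E : Set (Set V)} {T D : Set V} (hT : IsTransversal E T)
    (hTD : Disjoint T D) : IsTransversal ((· \ D) '' E) T := by
  rintro _ ⟨h, hhE, rfl⟩
  obtain ⟨t, htT, hth⟩ := hT h hhE
  exact ⟨t, htT, hth, hTD.notMem_of_mem_left htT⟩

lemma mem_minEdges_iff {F : Set (Set V)} {h : Set V} : h ∈ minEdges F ↔ Minimal (· ∈ F) h := by
  rw [minimal_iff]
  exact and_congr_right fun _ =>
    ⟨fun hmin f hf hfh => (hmin f hf hfh).symm, fun hmin f hf hfh => (hmin hf hfh).symm⟩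

lemma exists_mem_minEdges_subset [Finite V] {F : Set (Set V)} {g : Set V} (hg : g ∈ F) :
    ∃ g' ∈ minEdges F, g' ⊆ g := by
  obtain ⟨g', hg'g, hg'⟩ := F.toFinite.exists_le_minimal hg
  exact ⟨g', mem_minEdges_iff.2 hg', hg'g⟩

lemma isTransversal_minEdges_iff [Finite V] {F : Set (Set V)} {T : Set V} :
    IsTransversal (minEdges F) T ↔ IsTransversal F T := by
  refine ⟨fun hT g hg => ?_, fun hT g hg => hT g hg.1⟩
  obtain ⟨g', hg', hg'g⟩ := exists_mem_minEdges_subset hg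
  exact (hT g' hg').mono (inter_subset_inter_right T hg'g)

lemma mem_blocker_iff_minimal {E : Set (Set V)} {T : Set V} :
    T ∈ blocker E ↔ Minimal (IsTransversal E) T := by
  rw [minimal_iff]
  exact and_congr_right fun _ =>
    ⟨fun hmin T' hT' hT'T => (hmin T' hT'T hT').symm, fun hmin T' hT'T hT' => (hmin hT' hT'T).symm⟩

lemma blocker_congr {E F : Set (Set V)} (hEF : ∀ T, IsTransversal E T ↔ IsTransversal F T) :
    blocker E = blocker F := by
  ext T
  simp only [blocker, Set.mem_ofPred_eq, hEF]

lemma exists_subset_mem_blocker [Finite V] {E : Set (Set V)} {T : Set V}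
    (hT : IsTransversal E T) : ∃ T' ⊆ T, T' ∈ blocker E := by
  obtain ⟨T', hT'T, hT'⟩ := {T | IsTransversal E T}.toFinite.exists_le_minimal hT
  exact ⟨T', hT'T, mem_blocker_iff_minimal.2 hT'⟩

lemma mem_blocker_iff_forall_exists_inter_eq_singleton {E : Set (Set V)} {T : Set V} :
    T ∈ blocker E ↔ IsTransversal E T ∧ ∀ t ∈ T, ∃ h ∈ E, h ∩ T = {t} := by
  refine ⟨fun hT => ⟨hT.1, fun t ht => ?_⟩, fun ⟨hT, hpriv⟩ => ⟨hT, fun T' hT'T hT' => ?_⟩⟩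
  · by_contra! hno
    have hdrop : IsTransversal E (T \ {t}) := by
      intro h hh
      by_contra hmiss
      have hsub : h ∩ T ⊆ {t} := fun r ⟨hrh, hrT⟩ =>
        by_contra fun hrt => hmiss ⟨r, ⟨hrT, hrt⟩, hrh⟩
      have hne : (h ∩ T).Nonempty := by
        rw [inter_comm]
        exact hT.1 h hh
      exact hno h hh (hne.subset_singleton_iff.1 hsub)
    rw [← hT.2 _ sdiff_subset hdrop] at ht
    exact ht.2 rfl
  · refine Subset.antisymm hT'T fun t ht => ?_
    obtain ⟨h, hhE, hhT⟩ := hpriv t ht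
    obtain ⟨s, hsT', hsh⟩ := hT' h hhE
    have hst : s ∈ h ∩ T := ⟨hsh, hT'T hsT'⟩
    rw [hhT, mem_singleton_iff] at hst
    exact hst ▸ hsT'

lemma isTransversal_cOp_iff [Finite V] {E : Set (Set V)} {h T : Set V} {u v : V} :
    IsTransversal (cOp E h u v) T ↔
      IsTransversal ((· \ (h \ {u})) '' del E u ∪ (· \ (h \ {v})) '' del E v) T := by
  simp only [cOp, cJoin, contrSet, isTransversal_minEdges_iff, isTransversal_union_iff]

lemma sdiff_mem_blocker_cOp [Finite V] {E : Set (Set V)} {T h : Set V} {x z : V}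
    (hT : T ∈ blocker E) (hhT : h ∩ T = {z}) (hdrop : IsTransversal (del E x) (T \ {z})) :
    T \ {z} ∈ blocker (cOp E h x z) := by
  have hdisj : ∀ D ⊆ h, Disjoint (T \ {z}) D := fun D hD =>
    disjoint_left.2 fun t ⟨htT, htz⟩ htD => htz (hhT ▸ ⟨hD htD, htT⟩)
  rw [blocker_congr fun _ => isTransversal_cOp_iff,
    mem_blocker_iff_forall_exists_inter_eq_singleton]
  refine ⟨isTransversal_union_iff.2 ⟨hdrop.image_sdiff (hdisj _ sdiff_subset),
    (hT.1.del_sdiff z).image_sdiff (hdisj _ sdiff_subset)⟩, ?_⟩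
  rintro t ⟨htT, htz⟩
  obtain ⟨f, hfE, hfT⟩ :=
    (mem_blocker_iff_forall_exists_inter_eq_singleton.1 hT).2 t htT
  have hzT : z ∈ T := (hhT ▸ mem_singleton z : z ∈ h ∩ T).2
  have hzf : z ∉ f := fun hzf => htz (hfT ▸ ⟨hzf, hzT⟩ : z ∈ ({t} : Set V)).symm
  refine ⟨f \ (h \ {z}), Or.inr ⟨f, ⟨hfE, hzf⟩, rfl⟩, Subset.antisymm ?_ ?_⟩
  · rintro s ⟨⟨hsf, -⟩, hsT, -⟩
    exact hfT ▸ ⟨hsf, hsT⟩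
  · refine singleton_subset_iff.2 ?_
    have htf : t ∈ f ∩ T := hfT ▸ mem_singleton t
    exact ⟨⟨htf.1, (hdisj _ sdiff_subset).notMem_of_mem_left ⟨htT, htz⟩⟩, htT, htz⟩

theorem stmt_7_general {V : Type} [Fintype V] (E : Set (Set V))
    (T : Set V) (hT : T ∈ blocker E) (S : Set V) (x : V) :
    (∃ T' ⊆ T \ {x}, T' ∈ blocker (del E x) ∧ T' ∩ S = (T \ {x}) ∩ S) ∨
    (∃ z ∈ S \ {x}, ∃ h ∈ E, x ∈ h ∧ h ∩ T = {z} ∧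
      T \ {z} ∈ blocker (cOp E h x z)) := by
  by_cases hdrop : ∃ z ∈ S \ {x}, z ∈ T ∧ IsTransversal (del E x) (T \ {z})
  · right
    obtain ⟨z, hzS, hzT, hzdrop⟩ := hdrop
    obtain ⟨h, hhE, hhT⟩ :=
      (mem_blocker_iff_forall_exists_inter_eq_singleton.1 hT).2 z hzT
    have hxh : x ∈ h := by
      by_contra hxh
      obtain ⟨t, ⟨htT, htz⟩, hth⟩ := hzdrop h ⟨hhE, hxh⟩
      exact htz (hhT ▸ ⟨hth, htT⟩)
    exact ⟨z, hzS, h, hhE, hxh, hhT, sdiff_mem_blocker_cOp hT hhT hzdrop⟩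
  · left
    obtain ⟨T', hT'T, hT'⟩ := exists_subset_mem_blocker (hT.1.del_sdiff x)
    refine ⟨T', hT'T, hT', Subset.antisymm (inter_subset_inter_left S hT'T) ?_⟩
    rintro z ⟨⟨hzT, hzx⟩, hzS⟩
    refine ⟨?_, hzS⟩
    by_contra hzT'
    exact hdrop ⟨z, ⟨hzS, hzx⟩, hzT,
      hT'.1.mono (subset_sdiff_singleton (hT'T.trans sdiff_subset) hzT')⟩

/-- the two types of minimal transversals. -/
theorem stmt_7 {V : Type} [Fintype V] (E : Set (Set V)) (hC : IsClutter E)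
    (T : Set V) (hT : T ∈ blocker E) (S : Set V) (x : V) :
    (∃ T' ⊆ T \ {x}, T' ∈ blocker (del E x) ∧ T' ∩ S = (T \ {x}) ∩ S) ∨
    (∃ z ∈ S \ {x}, ∃ h ∈ E, x ∈ h ∧ h ∩ T = {z} ∧
      T \ {z} ∈ blocker (cOp E h x z)) :=
  stmt_7_general E T hT S x
end

section
/- Suppose H and F are r-uniform hypergraphs. A mapping f : V(H) → V(F) is a homomorphism (image of every edge of H is an edge of F) if and only if f⁻¹(I) is an independent set of H for every maximal independent set I of F. -/
open Set

universe u

variable {V : Type u}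

/-! If `f` maps edges to edges, preimages of independent sets are independent. Conversely, if
some edge `h` of `H` has `f '' h ∉ EF`, then `f '' h` has at most `r` vertices and is not an
edge, so by `r`-uniformity of `F` it contains no edge; extending it to a maximal independent set
`I` gives `h ⊆ f ⁻¹' I`. -/

section

variable {α β : Type*}

theorem HIndep.preimage {EH : Set (Set α)} {EF : Set (Set β)} {f : α → β}
    (hom : ∀ h ∈ EH, f '' h ∈ EF) {I : Set β} (hI : HIndep EF I) :
    HIndep EH (f ⁻¹' I) :=
  fun h hh hsub => hI (f '' h) (hom h hh) (image_subset_iff.mpr hsub)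

theorem maxHIndep_iff_maximal {E : Set (Set β)} {I : Set β} :
    MaxHIndep E I ↔ Maximal (HIndep E) I :=
  ⟨fun hI => ⟨hI.1, fun J hJ hIJ => (hI.2 J hJ hIJ).le⟩,
    fun hI => ⟨hI.1, fun _ hJ hIJ => (hI.2 hJ hIJ).antisymm hIJ⟩⟩

theorem HIndep.exists_maxHIndep_superset [Finite β] {E : Set (Set β)} {J : Set β}
    (hJ : HIndep E J) : ∃ I, J ⊆ I ∧ MaxHIndep E I := by
  obtain ⟨I, hJI, hI⟩ := (toFinite {J | HIndep E J}).exists_le_maximal hJ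
  exact ⟨I, hJI, maxHIndep_iff_maximal.mpr hI⟩

theorem hIndep_of_ncard_le_of_notMem {E : Set (Set β)} {r : ℕ} (hE : ∀ e ∈ E, e.ncard = r)
    {S : Set β} (hS : S.Finite) (hSr : S.ncard ≤ r) (hSE : S ∉ E) : HIndep E S := by
  intro e he heS
  have heS' : e = S := eq_of_subset_of_ncard_le heS (hSr.trans (hE e he).ge) hS
  exact hSE (heS' ▸ he)

end

/-- for `r`-uniform hypergraphs, `f` is a homomorphism iff the
preimage of every maximal independent set is independent. -/
theorem stmt_8 {V W : Type} [Fintype V] [Fintype W] (r : ℕ)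
    (EH : Set (Set V)) (EF : Set (Set W))
    (hH : ∀ h ∈ EH, h.ncard = r) (hF : ∀ h ∈ EF, h.ncard = r)
    (f : V → W) :
    (∀ h ∈ EH, f '' h ∈ EF) ↔
      (∀ I : Set W, MaxHIndep EF I → HIndep EH (f ⁻¹' I)) := by
  refine ⟨fun hom I hI => hI.1.preimage hom, fun hyp h hh => ?_⟩
  by_contra himage
  have hcard : (f '' h).ncard ≤ r := (ncard_image_le (toFinite h)).trans (hH h hh).le
  have hindep : HIndep EF (f '' h) := hIndep_of_ncard_le_of_notMem hF (toFinite _) hcard himage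
  obtain ⟨I, hhI, hI⟩ := hindep.exists_maxHIndep_superset
  exact hyp I hI h hh (image_subset_iff.mp hhI)
end

section
/- For every graph G, α-tw(G) = μ-tw(M(G)), where M(G) is obtained from G by attaching a pendant vertex to every vertex of G. Moreover μ-tw(G) ≤ α-tw(G) for every graph G. -/
open Set

universe u

variable {V : Type u}

section Helpers12

variable {W : Type u} [Fintype W]

lemma indMatching_a_inj {G : SimpleGraph W} {k : ℕ} {a b : Fin k → W}
    (h : IsInducedMatching G k a b) : Function.Injective a := by
  intro i j hij
  by_contra hne
  exact (h.2 i j hne (a i) (Set.mem_insert _ _) (a j) (Set.mem_insert _ _)).1 hij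

lemma mu_bddAbove (G : SimpleGraph W) (S : Set W) :
    BddAbove {k | ∃ a b : Fin k → W, IsInducedMatching G k a b ∧ ∀ i, a i ∈ S ∨ b i ∈ S} := by
  refine ⟨Fintype.card W, ?_⟩
  rintro k ⟨a, b, hm, -⟩
  simpa using Fintype.card_le_of_injective a (indMatching_a_inj hm)

lemma mu_zero_mem (G : SimpleGraph W) (S : Set W) :
    0 ∈ {k | ∃ a b : Fin k → W, IsInducedMatching G k a b ∧ ∀ i, a i ∈ S ∨ b i ∈ S} :=
  ⟨Fin.elim0, Fin.elim0, ⟨fun i => i.elim0, fun i => i.elim0⟩, fun i => i.elim0⟩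

lemma alpha_bddAbove (G : SimpleGraph W) (S : Set W) :
    BddAbove {n | ∃ I : Set W, I ⊆ S ∧ IndepSet G I ∧ I.ncard = n} := by
  refine ⟨Fintype.card W, ?_⟩
  rintro n ⟨I, -, -, rfl⟩
  calc I.ncard ≤ (Set.univ : Set W).ncard :=
        Set.ncard_le_ncard (Set.subset_univ I) Set.finite_univ
    _ = Fintype.card W := by rw [Set.ncard_univ, Nat.card_eq_fintype_card]

lemma alpha_zero_mem (G : SimpleGraph W) (S : Set W) :
    0 ∈ {n | ∃ I : Set W, I ⊆ S ∧ IndepSet G I ∧ I.ncard = n} :=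
  ⟨∅, Set.empty_subset _, Set.pairwise_empty _, Set.ncard_empty _⟩

lemma ncard_range_of_matching {k : ℕ} {c : Fin k → W} (hinj : Function.Injective c) :
    (Set.range c).ncard = k := by
  rw [← Set.image_univ, Set.ncard_image_of_injective _ hinj, Set.ncard_univ]
  simp

lemma muS_le_alphaS (G : SimpleGraph W) (S : Set W) : muS G S ≤ alphaS G S := by
  refine csSup_le ⟨0, mu_zero_mem G S⟩ ?_
  rintro k ⟨a, b, hm, hs⟩
  refine le_csSup (alpha_bddAbove G S) ?_
  have hch : ∀ i, ∃ v, v ∈ ({a i, b i} : Set W) ∧ v ∈ S := by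
    intro i
    rcases hs i with h | h
    · exact ⟨a i, Set.mem_insert _ _, h⟩
    · exact ⟨b i, Set.mem_insert_of_mem _ rfl, h⟩
  choose c hc1 hc2 using hch
  have cinj : Function.Injective c := by
    intro i j hij
    by_contra hne
    exact (hm.2 i j hne (c i) (hc1 i) (c j) (hc1 j)).1 hij
  refine ⟨Set.range c, ?_, ?_, ncard_range_of_matching cinj⟩
  · rintro _ ⟨i, rfl⟩; exact hc2 i
  · rintro _ ⟨i, rfl⟩ _ ⟨j, rfl⟩ hne hadj
    have hij : i ≠ j := fun h => hne (by rw [h])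
    exact (hm.2 i j hij (c i) (hc1 i) (c j) (hc1 j)).2 hadj

lemma pend_adj_inl_inl {G : SimpleGraph W} {u v : W} :
    (pend G).Adj (Sum.inl u) (Sum.inl v) ↔ G.Adj u v := by
  constructor
  · rintro ⟨hne, h | h⟩
    · exact h
    · exact h.symm
  · intro h
    exact ⟨by simpa using h.ne, Or.inl h⟩

lemma pend_adj_inl_inr {G : SimpleGraph W} {u v : W} :
    (pend G).Adj (Sum.inl u) (Sum.inr v) ↔ u = v := by
  constructor
  · rintro ⟨hne, h | h⟩
    · exact h
    · exact h.elim
  · rintro rfl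
    exact ⟨by simp, Or.inl rfl⟩

lemma pend_not_adj_inr_inr {G : SimpleGraph W} {u v : W} :
    ¬ (pend G).Adj (Sum.inr u) (Sum.inr v) := by
  rintro ⟨hne, h | h⟩ <;> exact h

lemma pend_adj_inr {G : SimpleGraph W} {u : W} {y : W ⊕ W}
    (h : (pend G).Adj (Sum.inr u) y) : y = Sum.inl u := by
  cases y with
  | inl v =>
    have := pend_adj_inl_inr.mp h.symm
    rw [this]
  | inr v => exact (pend_not_adj_inr_inr h).elim

lemma alpha_le_mu_pend (G : SimpleGraph W) (B : Set (W ⊕ W)) :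
    alphaS G (Sum.inl ⁻¹' B) ≤ muS (pend G) B := by
  refine csSup_le ⟨0, alpha_zero_mem G _⟩ ?_
  rintro n ⟨I, hIB, hInd, hn⟩
  refine le_csSup (mu_bddAbove (pend G) B) ?_
  haveI : Fintype I := (Set.toFinite I).fintype
  have hcard : Fintype.card I = n := by
    rw [← Nat.card_eq_fintype_card, Nat.card_coe_set_eq, hn]
  let e : Fin n ≃ I := (Fintype.equivFinOfCardEq hcard).symm
  refine ⟨fun i => Sum.inl (e i), fun i => Sum.inr (e i), ⟨?_, ?_⟩, ?_⟩
  · intro i; exact pend_adj_inl_inr.mpr rfl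
  · intro i j hij x hx y hy
    have hvw : (e i : W) ≠ (e j : W) := by
      intro h
      exact hij (e.injective (Subtype.ext h))
    have hnadj : ¬ G.Adj (e i) (e j) := hInd (e i).2 (e j).2 hvw
    rcases hx with rfl | hx <;> rcases hy with rfl | hy
    · exact ⟨by simpa using hvw, fun h => hnadj (pend_adj_inl_inl.mp h)⟩
    · rw [Set.mem_singleton_iff] at hy; subst hy
      exact ⟨by simp, fun h => hvw (pend_adj_inl_inr.mp h)⟩
    · rw [Set.mem_singleton_iff] at hx; subst hx
      exact ⟨by simp, fun h => hvw (pend_adj_inl_inr.mp h.symm).symm⟩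
    · rw [Set.mem_singleton_iff] at hx hy; subst hx; subst hy
      exact ⟨by simpa using hvw, pend_not_adj_inr_inr⟩
  · intro i
    exact Or.inl (hIB (e i).2)

lemma mu_pend_le_alpha (G : SimpleGraph W) (B : Set W) :
    muS (pend G) (Sum.elim id id ⁻¹' B) ≤ alphaS G B := by
  refine csSup_le ⟨0, mu_zero_mem _ _⟩ ?_
  rintro k ⟨a, b, hm, hs⟩
  refine le_csSup (alpha_bddAbove G B) ?_
  have key : ∀ i, ∃ v, Sum.inl v ∈ ({a i, b i} : Set (W ⊕ W)) ∧ v ∈ B := by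
    intro i
    have hadj := hm.1 i
    rcases hs i with h | h
    · cases ha : a i with
      | inl u =>
        rw [ha] at h
        exact ⟨u, Set.mem_insert _ _, h⟩
      | inr u =>
        rw [ha] at h hadj
        have hb : b i = Sum.inl u := pend_adj_inr hadj
        rw [hb]
        exact ⟨u, Set.mem_insert_of_mem _ rfl, h⟩
    · cases hbb : b i with
      | inl u =>
        rw [hbb] at h
        exact ⟨u, Set.mem_insert_of_mem _ rfl, h⟩
      | inr u =>
        rw [hbb] at h hadj
        have ha : a i = Sum.inl u := pend_adj_inr hadj.symm
        rw [ha]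
        exact ⟨u, Set.mem_insert _ _, h⟩
  choose c hc1 hc2 using key
  have cinj : Function.Injective c := by
    intro i j hij
    by_contra hne
    exact (hm.2 i j hne _ (hc1 i) _ (hc1 j)).1 (by rw [hij])
  refine ⟨Set.range c, ?_, ?_, ncard_range_of_matching cinj⟩
  · rintro _ ⟨i, rfl⟩; exact hc2 i
  · rintro _ ⟨i, rfl⟩ _ ⟨j, rfl⟩ hne hadj
    have hij : i ≠ j := fun h => hne (by rw [h])
    exact (hm.2 i j hij _ (hc1 i) _ (hc1 j)).2 (pend_adj_inl_inl.mpr hadj)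

lemma trivial_decomp (G : SimpleGraph W) :
    IsTreeDecomp G (⊥ : SimpleGraph Unit) (fun _ => (Set.univ : Set W)) := by
  constructor
  · constructor
    intro a b
    rw [Subsingleton.elim a b]
  · intro v c hc
    cases c with
    | nil => exact hc.ne_nil rfl
    | cons h q => simp at h
  · intro u v _
    exact ⟨(), Set.mem_univ u, Set.mem_univ v⟩
  · intro v
    haveI : Nonempty {t : Unit | v ∈ (Set.univ : Set W)} := ⟨⟨(), Set.mem_univ v⟩⟩
    constructor
    intro a b
    rw [Subsingleton.elim a b]

lemma lamTW_set_nonempty (G : SimpleGraph W) (lam : Set W → ℕ) :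
    {k | ∃ (ι : Type) (T : SimpleGraph ι) (bag : ι → Set W),
      IsTreeDecomp G T bag ∧ ∀ t, lam (bag t) ≤ k}.Nonempty :=
  ⟨lam Set.univ, Unit, ⊥, fun _ => Set.univ, trivial_decomp G, fun _ => le_rfl⟩

end Helpers12

/-- `α-tw(G) = μ-tw(M(G))`, and `μ-tw(G) ≤ α-tw(G)`. -/
theorem stmt_12 {V : Type} [Fintype V] (G : SimpleGraph V) :
    lamTW G (alphaS G) = lamTW (pend G) (muS (pend G)) ∧
    lamTW G (muS G) ≤ lamTW G (alphaS G) := by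
  have hMne := lamTW_set_nonempty (pend G) (muS (pend G))
  have hGne := lamTW_set_nonempty G (alphaS G)
  refine ⟨le_antisymm ?_ ?_, ?_⟩
  · -- α-tw(G) ≤ μ-tw(M(G))
    obtain ⟨ι, T, bag, hd, hb⟩ := Nat.sInf_mem hMne
    refine Nat.sInf_le ⟨ι, T, fun t => Sum.inl ⁻¹' bag t, ⟨hd.conn, hd.acyclic, ?_, ?_⟩, ?_⟩
    · intro u v huv
      obtain ⟨t, h1, h2⟩ := hd.edge_cover (pend_adj_inl_inl.mpr huv)
      exact ⟨t, h1, h2⟩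
    · intro v
      exact hd.vert_conn (Sum.inl v)
    · intro t
      exact (alpha_le_mu_pend G (bag t)).trans (hb t)
  · -- μ-tw(M(G)) ≤ α-tw(G)
    obtain ⟨ι, T, bag, hd, hb⟩ := Nat.sInf_mem hGne
    refine Nat.sInf_le ⟨ι, T, fun t => Sum.elim id id ⁻¹' bag t, ⟨hd.conn, hd.acyclic, ?_, ?_⟩, ?_⟩
    · rintro (u | u) (v | v) huv
      · obtain ⟨t, h1, h2⟩ := hd.edge_cover (pend_adj_inl_inl.mp huv)
        exact ⟨t, h1, h2⟩
      · have huv' := pend_adj_inl_inr.mp huv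
        subst huv'
        obtain ⟨⟨t, ht⟩⟩ := (hd.vert_conn u).nonempty
        exact ⟨t, ht, ht⟩
      · have hvu : v = u := pend_adj_inl_inr.mp huv.symm
        obtain ⟨⟨t, ht⟩⟩ := (hd.vert_conn u).nonempty
        exact ⟨t, ht, show v ∈ bag t by rw [hvu]; exact ht⟩
      · exact (pend_not_adj_inr_inr huv).elim
    · rintro (v | v)
      · exact hd.vert_conn v
      · exact hd.vert_conn v
    · intro t
      exact (mu_pend_le_alpha G (bag t)).trans (hb t)
  · -- μ-tw(G) ≤ α-tw(G)
    obtain ⟨ι, T, bag, hd, hb⟩ := Nat.sInf_mem hGne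
    exact Nat.sInf_le ⟨ι, T, bag, hd, fun t => (muS_le_alphaS G (bag t)).trans (hb t)⟩
end

section
/- For every graph G, μ-tw(G) = α-tw(L²(G)), where L²(G) is the graph on E(G) with ef an edge whenever the distance between e and f in the line graph L(G) is 1 or 2 (equivalently, G[e ∪ f] is connected). -/
open Set

universe u

variable {V : Type u}

/-! For a tree decomposition `(T, B)` of `G`, the bags `{e | e meets B t}` form a tree decomposition
of `L²(G)`, and an independent set of `L²(G)` among the edges meeting `B t` is an induced matching of
`G` whose edges meet `B t`. Conversely, from a tree decomposition `(T, F)` of `L²(G)` take as bags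
the vertices all of whose incident edges lie in `F t`: the edges at a vertex, or at the two ends of
an edge, form a clique of `L²(G)`, so by the Helly property of subtrees they lie in a common bag; an
induced matching of `G` with edges meeting such a bag is an independent set of `L²(G)` inside `F t`.
So each width bounds the other bag by bag, on the same tree. -/

open SimpleGraph

namespace SimpleGraph.IsAcyclic

variable {ι : Type*} {T : SimpleGraph ι}

lemma support_subset_of_isPath (hac : T.IsAcyclic) {A : Set ι}
    (hA : (T.induce A).Connected) {x y : ι} (hx : x ∈ A) (hy : y ∈ A) {q : T.Walk x y}
    (hq : q.IsPath) : {z | z ∈ q.support} ⊆ A := by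
  classical
  obtain ⟨w⟩ := hA.preconnected ⟨x, hx⟩ ⟨y, hy⟩
  let w' := w.map (Embedding.induce A).toHom
  have hqw : q = w'.bypass :=
    congrArg Subtype.val ((hac.subsingleton_path x y).elim ⟨q, hq⟩ ⟨_, w'.bypass_isPath⟩)
  intro z hz
  have hz' : z ∈ w'.support := w'.support_bypass_subset_support (hqw ▸ hz)
  rw [Walk.support_map, List.mem_map] at hz'
  obtain ⟨z', -, rfl⟩ := hz'
  exact z'.2

lemma induce_sInter_connected (hac : T.IsAcyclic) (hT : T.Preconnected)
    {𝒜 : Set (Set ι)} (h𝒜 : ∀ A ∈ 𝒜, (T.induce A).Connected) (hne : (⋂₀ 𝒜).Nonempty) :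
    (T.induce (⋂₀ 𝒜)).Connected := by
  obtain ⟨u, hu⟩ := hne
  refine T.induce_connected_of_patches u hu fun {v} hv => ?_
  obtain ⟨p, hp⟩ := (hT u v).exists_isPath
  have hpA : {z | z ∈ p.support} ⊆ ⋂₀ 𝒜 := fun z hz => mem_sInter.mpr fun A hA =>
    hac.support_subset_of_isPath (h𝒜 A hA) (mem_sInter.mp hu A hA) (mem_sInter.mp hv A hA) hp hz
  exact ⟨_, hpA, p.start_mem_support, p.end_mem_support,
    p.connected_induce_support.preconnected _ _⟩

lemma induce_inter_connected (hac : T.IsAcyclic) (hT : T.Preconnected)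
    {A B : Set ι} (hA : (T.induce A).Connected) (hB : (T.induce B).Connected)
    (hAB : (A ∩ B).Nonempty) : (T.induce (A ∩ B)).Connected := by
  rw [← sInter_pair] at hAB ⊢
  exact hac.induce_sInter_connected hT (by simp [hA, hB]) hAB

lemma exists_median (hac : T.IsAcyclic) {a b c : ι} (p : T.Walk a b)
    (hp : p.IsPath) (r : T.Walk a c) (hr : r.IsPath) :
    ∃ m ∈ p.support, m ∈ r.support ∧ ∀ q : T.Walk b c, q.IsPath → m ∈ q.support := by
  classical
  induction p with
  | nil => exact ⟨_, by simp, r.start_mem_support, fun q _ => q.start_mem_support⟩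
  | @cons a d b had p' ih =>
    rw [Walk.cons_isPath_iff] at hp
    by_cases hd : d ∈ r.support
    · obtain ⟨m, hm₁, hm₂, hm₃⟩ := ih hp.1 (r.dropUntil d hd) (hr.dropUntil hd)
      exact ⟨m, by simp [hm₁], r.support_dropUntil_subset_support hd hm₂, hm₃⟩
    have hr' : (Walk.cons had.symm r).IsPath := (Walk.cons_isPath_iff _ _).mpr ⟨hr, hd⟩
    obtain ⟨m, hm₁, hm₂, hm₃⟩ := ih hp.1 _ hr'
    rcases List.mem_cons.mp (Walk.support_cons _ _ ▸ hm₂) with rfl | hm₂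
    · -- every path `q : b ⟶ c` passes through `d`, and from there it must continue through `a`
      refine ⟨a, by simp, r.start_mem_support, fun q hq => ?_⟩
      have hdq := hm₃ q hq
      have htail : q.dropUntil m hdq = Walk.cons had.symm r :=
        congrArg Subtype.val ((hac.subsingleton_path _ _).elim ⟨_, hq.dropUntil hdq⟩ ⟨_, hr'⟩)
      refine q.support_dropUntil_subset_support hdq ?_
      rw [htail, Walk.support_cons]
      exact List.mem_cons_of_mem _ r.start_mem_support
    · exact ⟨m, by simp [hm₁], hm₂, hm₃⟩

lemma inter_inter_nonempty (hac : T.IsAcyclic) (hT : T.Preconnected)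
    {A B C : Set ι} (hA : (T.induce A).Connected) (hB : (T.induce B).Connected)
    (hC : (T.induce C).Connected) (hAB : (A ∩ B).Nonempty) (hBC : (B ∩ C).Nonempty)
    (hAC : (A ∩ C).Nonempty) : (A ∩ B ∩ C).Nonempty := by
  obtain ⟨a, haA, haB⟩ := hAB
  obtain ⟨b, hbB, hbC⟩ := hBC
  obtain ⟨c, hcA, hcC⟩ := hAC
  obtain ⟨p, hp⟩ := (hT a b).exists_isPath
  obtain ⟨r, hr⟩ := (hT a c).exists_isPath
  obtain ⟨q, hq⟩ := (hT b c).exists_isPath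
  obtain ⟨m, hmp, hmr, hmq⟩ := hac.exists_median p hp r hr
  exact ⟨m, ⟨hac.support_subset_of_isPath hA haA hcA hr hmr,
    hac.support_subset_of_isPath hB haB hbB hp hmp⟩,
    hac.support_subset_of_isPath hC hbC hcC hq (hmq q hq)⟩

lemma helly_sInter_nonempty (hac : T.IsAcyclic) (hT : T.Connected)
    {𝒜 : Set (Set ι)} (hfin : 𝒜.Finite) (h𝒜 : ∀ A ∈ 𝒜, (T.induce A).Connected)
    (hpair : ∀ A ∈ 𝒜, ∀ B ∈ 𝒜, (A ∩ B).Nonempty) : (⋂₀ 𝒜).Nonempty := by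
  suffices key : ∀ C, (T.induce C).Connected → (∀ A ∈ 𝒜, (C ∩ A).Nonempty) →
      (C ∩ ⋂₀ 𝒜).Nonempty by
    simpa using key univ (T.induceUnivIso.connected_iff.mpr hT)
      fun A hA => by simpa using nonempty_coe_sort.mp (h𝒜 A hA).nonempty
  induction 𝒜, hfin using Set.Finite.induction_on with
  | empty => exact fun C hC _ => by simpa using nonempty_coe_sort.mp hC.nonempty
  | @insert A 𝒜 _ _ ih =>
    intro C hC hC𝒜
    simp only [mem_insert_iff, forall_eq_or_imp] at h𝒜 hpair hC𝒜
    have hCA : (T.induce (C ∩ A)).Connected :=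
      hac.induce_inter_connected hT.preconnected hC h𝒜.1 hC𝒜.1
    have := ih h𝒜.2 (fun B hB D hD => hpair.2 B hB |>.2 D hD) (C ∩ A) hCA fun B hB =>
      hac.inter_inter_nonempty hT.preconnected hC h𝒜.1 (h𝒜.2 B hB) hC𝒜.1 (hpair.1.2 B hB)
        (hC𝒜.2 B hB)
    rwa [sInter_insert, ← inter_assoc]

end SimpleGraph.IsAcyclic

section LineSquare

variable (G : SimpleGraph V)

lemma L2_adj_iff {e f : G.edgeSet} :
    (L2 G).Adj e f ↔ e ≠ f ∧ ∃ x ∈ (e : Sym2 V), ∃ y ∈ (f : Sym2 V), x = y ∨ G.Adj x y := by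
  rw [L2, fromRel_adj]
  refine and_congr_right fun _ => ⟨?_, Or.inl⟩
  rintro (h | ⟨x, hx, y, hy, hxy⟩)
  · exact h
  · exact ⟨y, hy, x, hx, hxy.imp Eq.symm Adj.symm⟩

lemma ne_and_not_L2_adj_iff {e f : G.edgeSet} : e ≠ f ∧ ¬ (L2 G).Adj e f ↔
    ¬ ∃ x ∈ (e : Sym2 V), ∃ y ∈ (f : Sym2 V), x = y ∨ G.Adj x y := by
  rw [L2_adj_iff]
  constructor
  · rintro ⟨hne, hadj⟩ htouch
    exact hadj ⟨hne, htouch⟩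
  · intro htouch
    refine ⟨?_, fun hadj => htouch hadj.2⟩
    rintro rfl
    have hx := (e : Sym2 V).out_fst_mem
    exact htouch ⟨_, hx, _, hx, Or.inl rfl⟩

lemma isInducedMatching_iff {k : ℕ} {a b : Fin k → V} (e : Fin k → G.edgeSet)
    (he : ∀ i, (e i : Sym2 V) = s(a i, b i)) :
    IsInducedMatching G k a b ↔ Pairwise fun i j => e i ≠ e j ∧ ¬ (L2 G).Adj (e i) (e j) := by
  have hadj : ∀ i, G.Adj (a i) (b i) := fun i => by simpa [he i] using (e i).2
  rw [IsInducedMatching, and_iff_right hadj, Pairwise]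
  refine forall₂_congr fun i j => imp_congr_right fun _ => ?_
  rw [ne_and_not_L2_adj_iff, he i, he j]
  simp only [mem_insert_iff, mem_singleton_iff, forall_and, or_imp, forall_eq, Sym2.mem_iff,
    exists_eq_or_imp, exists_eq_left, not_or]
  tauto

def edgesMeeting (S : Set V) : Set G.edgeSet := {e | ∃ x ∈ (e : Sym2 V), x ∈ S}

def vertsWithStarIn (F : Set G.edgeSet) : Set V :=
  {v | ∀ e : G.edgeSet, v ∈ (e : Sym2 V) → e ∈ F}

end LineSquare

lemma bddAbove_indepSet_ncard {W : Type*} [Finite W] (H : SimpleGraph W) (S : Set W) :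
    BddAbove {n | ∃ I : Set W, I ⊆ S ∧ IndepSet H I ∧ I.ncard = n} :=
  ⟨Nat.card W, by rintro n ⟨I, -, -, rfl⟩; exact ncard_le_card I⟩

section Width

variable [Finite V] (G : SimpleGraph V)

lemma bddAbove_inducedMatching_card (S : Set V) :
    BddAbove {k | ∃ a b : Fin k → V, IsInducedMatching G k a b ∧ ∀ i, a i ∈ S ∨ b i ∈ S} := by
  refine ⟨Nat.card V, ?_⟩
  rintro k ⟨a, _, ⟨-, hsep⟩, -⟩
  have ha : Function.Injective a := fun i j hij => by
    by_contra hne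
    exact (hsep i j hne _ (Or.inl rfl) _ (Or.inl rfl)).1 hij
  simpa using Nat.card_le_card_of_injective a ha

lemma alphaS_L2_edgesMeeting_le (S : Set V) : alphaS (L2 G) (edgesMeeting G S) ≤ muS G S := by
  refine csSup_le_csSup' (bddAbove_inducedMatching_card G S) ?_
  rintro _ ⟨I, hIS, hI, rfl⟩
  rw [← Nat.card_coe_set_eq]
  let e : Fin (Nat.card I) → G.edgeSet := fun i => (Finite.equivFin I).symm i
  have he_inj : e.Injective := Subtype.val_injective.comp (Finite.equivFin I).symm.injective
  have heI : ∀ i, e i ∈ I := fun i => ((Finite.equivFin I).symm i).2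
  -- orient each edge so that its first endpoint lies in `S`
  choose a ha haS using fun i => hIS (heI i)
  refine ⟨a, fun i => Sym2.Mem.other (ha i), ?_, fun i => Or.inl (haS i)⟩
  refine (isInducedMatching_iff G e fun i => (Sym2.other_spec (ha i)).symm).mpr fun i j hij => ?_
  exact ⟨he_inj.ne hij, hI (heI i) (heI j) (he_inj.ne hij)⟩

lemma muS_vertsWithStarIn_le (F : Set G.edgeSet) :
    muS G (vertsWithStarIn G F) ≤ alphaS (L2 G) F := by
  refine csSup_le_csSup' (bddAbove_indepSet_ncard (L2 G) F) ?_
  rintro k ⟨a, b, hM, hmeet⟩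
  let e : Fin k → G.edgeSet := fun i => ⟨s(a i, b i), G.mem_edgeSet.mpr (hM.1 i)⟩
  have hsep := (isInducedMatching_iff G e fun _ => rfl).mp hM
  have he_inj : e.Injective := fun i j hij => by
    by_contra hne
    exact (hsep hne).1 hij
  refine ⟨range e, ?_, ?_, ?_⟩
  · rintro _ ⟨i, rfl⟩
    rcases hmeet i with h | h
    · exact h (e i) (Sym2.mem_mk_left _ _)
    · exact h (e i) (Sym2.mem_mk_right _ _)
  · rintro _ ⟨i, rfl⟩ _ ⟨j, rfl⟩ hne
    exact (hsep fun hij => hne (congrArg e hij)).2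
  · rw [← image_univ, ncard_image_of_injective _ he_inj, ncard_univ, Nat.card_fin]

end Width

namespace IsTreeDecomp

variable {ι : Type} {T : SimpleGraph ι} {G : SimpleGraph V}

lemma exists_bag_superset_of_isClique {bag : ι → Set V}
    (h : IsTreeDecomp G T bag) {s : Set V} (hs : s.Finite) (hclique : G.IsClique s) :
    ∃ t, s ⊆ bag t := by
  have hpair : ∀ v ∈ s, ∀ w ∈ s, ({t | v ∈ bag t} ∩ {t | w ∈ bag t}).Nonempty := by
    intro v hv w hw
    obtain rfl | hvw := eq_or_ne v w
    · simpa using nonempty_coe_sort.mp (h.vert_conn v).nonempty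
    · exact h.edge_cover (hclique hv hw hvw)
  obtain ⟨t, ht⟩ := h.acyclic.helly_sInter_nonempty h.conn (hs.image fun v => {t | v ∈ bag t})
    (by rintro _ ⟨v, -, rfl⟩; exact h.vert_conn v) (by simpa using hpair)
  exact ⟨t, fun v hv => by simpa using mem_sInter.mp ht _ ⟨v, hv, rfl⟩⟩

lemma toL2 {bag : ι → Set V} (h : IsTreeDecomp G T bag) :
    IsTreeDecomp (L2 G) T fun t => edgesMeeting G (bag t) where
  conn := h.conn
  acyclic := h.acyclic
  edge_cover e f hef := by
    obtain ⟨-, x, hx, y, hy, rfl | hxy⟩ := (L2_adj_iff G).mp hef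
    · obtain ⟨t, ht⟩ := nonempty_coe_sort.mp (h.vert_conn x).nonempty
      exact ⟨t, ⟨x, hx, ht⟩, ⟨x, hy, ht⟩⟩
    · obtain ⟨t, hxt, hyt⟩ := h.edge_cover hxy
      exact ⟨t, ⟨x, hx, hxt⟩, ⟨y, hy, hyt⟩⟩
  vert_conn := by
    rintro ⟨e, he⟩
    induction e using Sym2.ind with | _ u v => ?_
    have hunion : {t | ⟨s(u, v), he⟩ ∈ edgesMeeting G (bag t)} =
        {t | u ∈ bag t} ∪ {t | v ∈ bag t} := by
      ext
      simp [edgesMeeting]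
    rw [hunion]
    exact induce_union_connected (h.vert_conn u).preconnected (h.vert_conn v).preconnected
      (h.edge_cover he)

lemma ofL2 [Finite V] {F : ι → Set G.edgeSet} (h : IsTreeDecomp (L2 G) T F) :
    IsTreeDecomp G T fun t => vertsWithStarIn G (F t) where
  conn := h.conn
  acyclic := h.acyclic
  edge_cover u v huv := by
    have hclique : (L2 G).IsClique {e : G.edgeSet | u ∈ (e : Sym2 V) ∨ v ∈ (e : Sym2 V)} := by
      rintro e (he | he) f (hf | hf) hne <;> refine (L2_adj_iff G).mpr ⟨hne, ?_⟩
      exacts [⟨u, he, u, hf, Or.inl rfl⟩, ⟨u, he, v, hf, Or.inr huv⟩,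
        ⟨v, he, u, hf, Or.inr huv.symm⟩, ⟨v, he, v, hf, Or.inl rfl⟩]
    obtain ⟨t, ht⟩ := h.exists_bag_superset_of_isClique (toFinite _) hclique
    exact ⟨t, fun e he => ht (Or.inl he), fun e he => ht (Or.inr he)⟩
  vert_conn v := by
    have hstar : {t | v ∈ vertsWithStarIn G (F t)} =
        ⋂₀ ((fun e => {t | e ∈ F t}) '' {e | v ∈ (e : Sym2 V)}) := by
      ext
      simp [vertsWithStarIn]
    have hclique : (L2 G).IsClique {e : G.edgeSet | v ∈ (e : Sym2 V)} :=
      fun e he f hf hne => (L2_adj_iff G).mpr ⟨hne, v, he, v, hf, Or.inl rfl⟩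
    obtain ⟨t, ht⟩ := h.exists_bag_superset_of_isClique (toFinite _) hclique
    rw [hstar]
    refine h.acyclic.induce_sInter_connected h.conn.preconnected ?_ ⟨t, ?_⟩
    · rintro _ ⟨e, -, rfl⟩
      exact h.vert_conn e
    · rintro _ ⟨e, he, rfl⟩
      exact ht he

end IsTreeDecomp

/-- `μ-tw(G) = α-tw(L²(G))`. -/
theorem stmt_14 {V : Type} [Fintype V] (G : SimpleGraph V) :
    lamTW G (muS G) = lamTW (L2 G) (alphaS (L2 G)) := by
  unfold lamTW
  congr 1
  ext k
  constructor
  · rintro ⟨ι, T, bag, hdec, hwidth⟩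
    exact ⟨ι, T, _, hdec.toL2, fun t => (alphaS_L2_edgesMeeting_le G (bag t)).trans (hwidth t)⟩
  · rintro ⟨ι, T, F, hdec, hwidth⟩
    exact ⟨ι, T, _, hdec.ofL2, fun t => (muS_vertsWithStarIn_le G (F t)).trans (hwidth t)⟩
end

section
/- Let H be a hypergraph with a tree decomposition (T, {B_t}) of λ-width at most k for a well-behaved measure λ, and let W ⊆ V(H). Then there exists a set S ⊆ V(H) with λ_H(S) ≤ k such that for every connected component C of the Gaifman graph of H with S removed, λ_H(W ∩ C) ≤ λ_H(W)/2. -/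
open Set

universe u

variable {V : Type u}

/-! The separator is a single bag `B_r`. For a tree edge `rs`, let `V(r → s)` be the set of
vertices outside `B_r` occurring in bags on the `s`-side of `rs`. Every component of `H - B_r`
lies inside some `V(r → s)`, and `V(r → s)`, `V(s → r)` are disjoint with no Gaifman edges between
them, so by additivity at most one of them carries more than half of `λ(W)`. Orient each tree edge
towards such a heavy side: no edge is oriented both ways and the `s`-side shrinks strictly along
directed paths, so in a finite tree some node `r` has no outgoing edge. -/

namespace SimpleGraph

variable {ι : Type*} {T : SimpleGraph ι}

def branch (T : SimpleGraph ι) (r s : ι) : Set ι :=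
  {i | (T.deleteEdges {s(r, s)}).Reachable s i}

lemma mem_branch_self (r s : ι) : s ∈ T.branch r s := Reachable.refl s

lemma Preconnected.mem_branch_or_mem_branch (hT : T.Preconnected) (r s i : ι) :
    i ∈ T.branch r s ∨ i ∈ T.branch s r := by
  induction (reachable_iff_reflTransGen r i).1 (hT r i) with
  | refl => exact Or.inr (mem_branch_self s r)
  | @tail a b _ hab ih =>
    by_cases he : s(a, b) = s(r, s)
    · rcases Sym2.eq_iff.1 he with ⟨-, rfl⟩ | ⟨-, rfl⟩
      · exact Or.inl (mem_branch_self r b)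
      · exact Or.inr (mem_branch_self s b)
    · have hab₁ : (T.deleteEdges {s(r, s)}).Adj a b := by simp [hab, he]
      have hab₂ : (T.deleteEdges {s(s, r)}).Adj a b := by simp [hab, he, Sym2.eq_swap]
      exact ih.imp (·.trans hab₁.reachable) (·.trans hab₂.reachable)

lemma IsBridge.mem_edges_of_mem_branch {r s i j : ι} (hb : T.IsBridge s(r, s))
    (hi : i ∈ T.branch r s) (hj : j ∈ T.branch s r) (p : T.Walk i j) : s(r, s) ∈ p.edges := by
  by_contra hp
  have hij : (T.deleteEdges {s(r, s)}).Reachable i j :=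
    reachable_deleteEdges_iff_exists_walk.2 ⟨p, hp⟩
  have hj' : (T.deleteEdges {s(r, s)}).Reachable r j := by rw [Sym2.eq_swap]; exact hj
  exact hb (hj'.trans hij.symm |>.trans hi.symm)

lemma IsAcyclic.branch_ssubset_branch (hT : T.IsAcyclic) {r s s' : ι} (hrs : T.Adj r s)
    (hss' : T.Adj s s') (hne : s' ≠ r) : T.branch s s' ⊂ T.branch r s := by
  classical
  have hb : T.IsBridge s(s, s') := isAcyclic_iff_forall_adj_isBridge.1 hT hss'
  refine (ssubset_iff_of_subset fun i hi => ?_).2 ⟨s, mem_branch_self r s, fun h => hb h.symm⟩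
  obtain ⟨p, hp⟩ := reachable_deleteEdges_iff_exists_walk.1 hi
  have hs : s ∉ p.support := fun hs => hb <| Reachable.symm <|
    reachable_deleteEdges_iff_exists_walk.2
      ⟨p.takeUntil s hs, fun h => hp (p.edges_takeUntil_subset_edges hs h)⟩
  refine reachable_deleteEdges_iff_exists_walk.2 ⟨Walk.cons hss' p, ?_⟩
  simp only [Walk.edges_cons, List.mem_cons, not_or]
  exact ⟨by simp [hne.symm, hrs.ne], fun h => hs (p.snd_mem_support_of_mem_edges h)⟩

lemma Connected.exists_adj_mem_branch (hT : T.Connected) {r i : ι} (hi : i ≠ r) :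
    ∃ s, T.Adj r s ∧ i ∈ T.branch r s := by
  obtain ⟨p, hp⟩ := (hT.preconnected r i).exists_isPath
  cases p with
  | nil => exact absurd rfl hi
  | cons h q =>
    refine ⟨_, h, reachable_deleteEdges_iff_exists_walk.2 ⟨q, fun he => ?_⟩⟩
    exact ((Walk.cons_isPath_iff h q).1 hp).2 (q.fst_mem_support_of_mem_edges he)

lemma IsAcyclic.exists_forall_not_of_asymm [Finite ι] [Nonempty ι] (hT : T.IsAcyclic)
    (R : ι → ι → Prop) (hR : ∀ r s, R r s → T.Adj r s) (hasymm : ∀ r s, R r s → ¬ R s r) :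
    ∃ r, ∀ s, ¬ R r s := by
  by_contra! h
  obtain ⟨s₀, hs₀⟩ := h (Classical.arbitrary ι)
  obtain ⟨⟨r, s⟩, hrs, hmin⟩ := exists_minimalFor_of_wellFoundedLT
    (fun p : ι × ι => R p.1 p.2) (fun p => (T.branch p.1 p.2).ncard) ⟨(_, s₀), hs₀⟩
  obtain ⟨s', hss'⟩ := h s
  have hne : s' ≠ r := by rintro rfl; exact hasymm _ _ hrs hss'
  have hlt : (T.branch s s').ncard < (T.branch r s).ncard :=
    ncard_lt_ncard (hT.branch_ssubset_branch (hR _ _ hrs) (hR _ _ hss') hne)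
  exact hlt.not_ge (hmin (j := (s, s')) hss' hlt.le)

def branchVerts (T : SimpleGraph ι) (bag : ι → Set V) (r s : ι) : Set V :=
  (⋃ m ∈ T.branch r s, bag m) \ bag r

end SimpleGraph

open SimpleGraph

lemma gaifMinus_adj {E : Set (Set V)} {S : Set V} {u v : V} :
    (gaifMinus E S).Adj u v ↔ (gaif E).Adj u v ∧ u ∉ S ∧ v ∉ S := by
  simp only [gaifMinus, fromRel_adj]
  constructor
  · rintro ⟨-, h | ⟨h, hv, hu⟩⟩
    exacts [h, ⟨h.symm, hu, hv⟩]
  · exact fun h => ⟨h.1.ne, Or.inl h⟩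

lemma WellBehaved.add_le {lam : Set (Set V) → Set V → ℚ} (hl : WellBehaved lam)
    {E : Set (Set V)} {X Y W : Set V} (hXY : Disjoint X Y)
    (hadj : ∀ x ∈ X, ∀ y ∈ Y, ¬ (gaif E).Adj x y) (hX : X ⊆ W) (hY : Y ⊆ W) :
    lam E X + lam E Y ≤ lam E W := by
  rw [← hl.add E X Y hXY hadj]
  exact hl.mono E E _ _ subset_rfl (union_subset hX hY)

namespace IsTreeDecomp

variable {ι : Type} {G : SimpleGraph V} {T : SimpleGraph ι} {bag : ι → Set V} {r s : ι}

lemma mem_bag_of_mem_branch (hD : IsTreeDecomp G T bag) (hrs : T.Adj r s) {i j : ι}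
    (hi : i ∈ T.branch r s) (hj : j ∈ T.branch s r) {u : V} (hui : u ∈ bag i) (huj : u ∈ bag j) :
    u ∈ bag r ∧ u ∈ bag s := by
  obtain ⟨p⟩ := (hD.vert_conn u).preconnected ⟨i, hui⟩ ⟨j, huj⟩
  set q := p.map (Embedding.induce {t | u ∈ bag t}).toHom
  have hq : ∀ t ∈ q.support, u ∈ bag t := by
    simp only [q, Walk.support_map, List.mem_map]
    rintro _ ⟨t, -, rfl⟩
    exact t.2
  have he := (isAcyclic_iff_forall_adj_isBridge.1 hD.acyclic hrs).mem_edges_of_mem_branch hi hj q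
  exact ⟨hq _ (q.fst_mem_support_of_mem_edges he), hq _ (q.snd_mem_support_of_mem_edges he)⟩

lemma disjoint_branchVerts (hD : IsTreeDecomp G T bag) (hrs : T.Adj r s) :
    Disjoint (T.branchVerts bag r s) (T.branchVerts bag s r) := by
  simp only [branchVerts, Set.disjoint_left, mem_sdiff, mem_iUnion₂]
  rintro u ⟨⟨i, hi, hui⟩, hur⟩ ⟨⟨j, hj, huj⟩, -⟩
  exact hur (hD.mem_bag_of_mem_branch hrs hi hj hui huj).1

lemma not_adj_of_mem_branchVerts (hD : IsTreeDecomp G T bag) (hrs : T.Adj r s) {x y : V}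
    (hx : x ∈ T.branchVerts bag r s) (hy : y ∈ T.branchVerts bag s r) : ¬ G.Adj x y := by
  simp only [branchVerts, mem_sdiff, mem_iUnion₂] at hx hy
  obtain ⟨⟨i, hi, hxi⟩, hxr⟩ := hx
  obtain ⟨⟨j, hj, hyj⟩, hys⟩ := hy
  intro hxy
  obtain ⟨m, hxm, hym⟩ := hD.edge_cover hxy
  rcases hD.conn.preconnected.mem_branch_or_mem_branch r s m with hm | hm
  · exact hys (hD.mem_bag_of_mem_branch hrs hm hj hym hyj).2
  · exact hxr (hD.mem_bag_of_mem_branch hrs hi hm hxi hxm).1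

lemma mem_branchVerts_of_adj (hD : IsTreeDecomp G T bag) (hrs : T.Adj r s) {a c : V}
    (hac : G.Adj a c) (hc : c ∉ bag r) (ha : a ∈ T.branchVerts bag r s) :
    c ∈ T.branchVerts bag r s := by
  simp only [branchVerts, mem_sdiff, mem_iUnion₂] at ha ⊢
  obtain ⟨⟨i, hi, hai⟩, har⟩ := ha
  obtain ⟨m, ham, hcm⟩ := hD.edge_cover hac
  refine ⟨⟨m, ?_, hcm⟩, hc⟩
  refine (hD.conn.preconnected.mem_branch_or_mem_branch r s m).resolve_right fun hm => ?_
  exact har (hD.mem_bag_of_mem_branch hrs hi hm hai ham).1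

lemma mem_branchVerts_of_reachable {E : Set (Set V)} (hD : IsTreeDecomp (gaif E) T bag)
    (hrs : T.Adj r s) {a c : V} (hreach : (gaifMinus E (bag r)).Reachable a c)
    (ha : a ∈ T.branchVerts bag r s) : c ∈ T.branchVerts bag r s := by
  rw [reachable_iff_reflTransGen] at hreach
  induction hreach with
  | refl => exact ha
  | tail _ hbc ih =>
    obtain ⟨hbc, -, hc⟩ := gaifMinus_adj.1 hbc
    exact hD.mem_branchVerts_of_adj hrs hbc hc ih

lemma exists_adj_mem_branchVerts (hD : IsTreeDecomp G T bag) {u : V} (hu : u ∉ bag r) :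
    ∃ s, T.Adj r s ∧ u ∈ T.branchVerts bag r s := by
  obtain ⟨⟨i, hui⟩⟩ := (hD.vert_conn u).nonempty
  obtain ⟨s, hrs, hi⟩ := hD.conn.exists_adj_mem_branch (r := r) (i := i) fun h => hu (h ▸ hui)
  exact ⟨s, hrs, mem_iUnion₂.2 ⟨i, hi, hui⟩, hu⟩

lemma exists_forall_lam_branchVerts_le [Finite ι] {lam : Set (Set V) → Set V → ℚ}
    (hl : WellBehaved lam) {E : Set (Set V)} (hD : IsTreeDecomp (gaif E) T bag) (W : Set V) :
    ∃ r, ∀ s, T.Adj r s → lam E (W ∩ T.branchVerts bag r s) ≤ lam E W / 2 := by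
  have := hD.conn.nonempty
  obtain ⟨r, hr⟩ := hD.acyclic.exists_forall_not_of_asymm
    (fun r s => T.Adj r s ∧ lam E W / 2 < lam E (W ∩ T.branchVerts bag r s))
    (fun _ _ h => h.1) fun r s ⟨hrs, hheavy⟩ ⟨_, hheavy'⟩ => by
      have := hl.add_le (W := W)
        ((hD.disjoint_branchVerts hrs).mono inter_subset_right inter_subset_right)
        (fun x hx y hy => hD.not_adj_of_mem_branchVerts hrs hx.2 hy.2)
        inter_subset_left inter_subset_left
      linarith
  exact ⟨r, fun s hrs => not_lt.1 fun h => hr s ⟨hrs, h⟩⟩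

end IsTreeDecomp

theorem stmt_16_general {V : Type} (lam : Set (Set V) → Set V → ℚ)
    (hl : WellBehaved lam) (E : Set (Set V)) (k : ℚ)
    {ι : Type} [Finite ι] (T : SimpleGraph ι) (bag : ι → Set V)
    (hD : IsTreeDecomp (gaif E) T bag) (hw : ∀ t, lam E (bag t) ≤ k)
    (W : Set V) :
    ∃ S : Set V, lam E S ≤ k ∧
      ∀ v ∉ S, lam E (W ∩ {u | (gaifMinus E S).Reachable v u}) ≤ lam E W / 2 := by
  obtain ⟨r, hr⟩ := hD.exists_forall_lam_branchVerts_le hl W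
  refine ⟨bag r, hw r, fun v hv => ?_⟩
  obtain ⟨s, hrs, hvs⟩ := hD.exists_adj_mem_branchVerts hv
  calc lam E (W ∩ {u | (gaifMinus E (bag r)).Reachable v u})
      ≤ lam E (W ∩ T.branchVerts bag r s) :=
        hl.mono E E _ _ subset_rfl
          (inter_subset_inter_right W fun _ hu => hD.mem_branchVerts_of_reachable hrs hu hvs)
    _ ≤ lam E W / 2 := hr s hrs

/-- balanced separators of low `λ`-width exist for hypergraphs of
`λ`-treewidth at most `k`. -/
theorem stmt_16 {V : Type} [Fintype V] (lam : Set (Set V) → Set V → ℚ)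
    (hl : WellBehaved lam) (E : Set (Set V)) (k : ℚ)
    {ι : Type} [Finite ι] (T : SimpleGraph ι) (bag : ι → Set V)
    (hD : IsTreeDecomp (gaif E) T bag) (hw : ∀ t, lam E (bag t) ≤ k)
    (W : Set V) :
    ∃ S : Set V, lam E S ≤ k ∧
      ∀ v ∉ S, lam E (W ∩ {u | (gaifMinus E S).Reachable v u}) ≤ lam E W / 2 :=
  stmt_16_general lam hl E k T bag hD hw W
end

section
/- Let H be a hypergraph with λ-tw(H) ≤ k for a well-behaved width measure λ, and let H = H_0, H_1, …, H_ℓ be a sequence where H_{i+1} is obtained from H_i by adding an edge {u,v} (u,v nonadjacent in the Gaifman graph of H_i) such that λ_H(N_{\underline{H_i}}(u) ∩ N_{\underline{H_i}}(v)) > k. Then every tree decomposition of H of λ-width at most k is also a tree decomposition of H_ℓ; moreover, every (A,B)-separator S of H with λ_H(S) ≤ k is an (A,B)-separator of each H_i. -/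
/-!
A new edge `uv` is only added when the common neighbourhood `W` of `u` and `v` has `λ`-value
above `k`. If no bag of a tree decomposition contained both `u` and `v`, some tree edge `ss'`
would separate the subtree of `u` from that of `v`; the subtree of each `w ∈ W` meets both, so
it contains `s`, and `W` would fit into the single bag at `s`, of `λ`-value at most `k`.
Likewise a separator `S` with `λ(S) ≤ k` misses some `w ∈ W`, and a walk through the new edge
`uv` can be rerouted along `u w v`.
-/

open Set

universe u

variable {V : Type u}

namespace SimpleGraph

variable {ι : Type} {T : SimpleGraph ι}

lemma reachable_deleteEdges_of_induce_connected {C : Set ι} (hC : (T.induce C).Connected)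
    {x y s s' : ι} (hx : x ∈ C) (hy : y ∈ C) (hs : s ∉ C) :
    (T.deleteEdges {s(s, s')}).Reachable x y := by
  obtain ⟨q⟩ := hC.preconnected ⟨x, hx⟩ ⟨y, hy⟩
  refine ⟨(q.map (Embedding.induce C).toHom).toDeleteEdges _ fun e he hes => hs ?_⟩
  rw [mem_singleton_iff] at hes
  subst hes
  have := Walk.fst_mem_support_of_mem_edges _ he
  rw [Walk.support_map, List.mem_map] at this
  obtain ⟨⟨z, hz⟩, -, rfl⟩ := this
  exact hz

lemma Walk.IsTrail.exists_boundary_edge {U : Set ι} {t₀ t₁ : ι} {p : T.Walk t₀ t₁}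
    (hp : p.IsTrail) (h₀ : t₀ ∈ U) (h₁ : t₁ ∉ U) :
    ∃ s s', T.Adj s s' ∧ s ∈ U ∧ s' ∉ U ∧ (T.deleteEdges {s(s, s')}).Reachable s' t₁ := by
  induction p with
  | nil => exact absurd h₀ h₁
  | @cons a c b hac q ih =>
    rw [Walk.isTrail_cons] at hp
    by_cases hc : c ∈ U
    · exact ih hp.1 hc h₁
    · exact ⟨a, c, hac, h₀, hc, ⟨q.toDeleteEdges _ fun e he hes => hp.2 (hes ▸ he)⟩⟩

lemma Walk.exists_walk_of_sup_edge {V : Type*} {G : SimpleGraph V} {u v w : V}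
    (huw : G.Adj u w) (hvw : G.Adj v w) {a b : V} (p : (G ⊔ edge u v).Walk a b) :
    ∃ q : G.Walk a b, ∀ x ∈ q.support, x ∈ p.support ∨ x = w := by
  induction p with
  | nil => exact ⟨.nil, fun x hx => .inl hx⟩
  | @cons a c b hac p ih =>
    obtain ⟨q, hq⟩ := ih
    suffices ∃ q' : G.Walk a b, ∀ x ∈ q'.support, x = a ∨ x = w ∨ x ∈ q.support by
      obtain ⟨q', hq'⟩ := this
      refine ⟨q', fun x hx => ?_⟩
      simp only [Walk.support_cons, List.mem_cons]
      grind
    rcases hac with hac | hac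
    · exact ⟨.cons hac q, by simp +contextual⟩
    · obtain ⟨⟨rfl, rfl⟩ | ⟨rfl, rfl⟩, -⟩ := (edge_adj _ _ _ _).mp hac
      · exact ⟨.cons huw (.cons hvw.symm q), by simp +contextual⟩
      · exact ⟨.cons hvw (.cons huw.symm q), by simp +contextual⟩

end SimpleGraph

open SimpleGraph

section TreeDecomp

variable {V : Type*} {ι : Type} {G : SimpleGraph V} {T : SimpleGraph ι} {bag : ι → Set V}

lemma IsTreeDecomp.exists_commonNeighbors_subset_bag (hT : IsTreeDecomp G T bag) {u v : V}
    (huv : ¬ ∃ t, u ∈ bag t ∧ v ∈ bag t) : ∃ t, G.commonNeighbors u v ⊆ bag t := by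
  classical
  obtain ⟨t₀, h₀⟩ := (hT.vert_conn u).nonempty
  obtain ⟨t₁, h₁⟩ := (hT.vert_conn v).nonempty
  obtain ⟨p⟩ := hT.conn.preconnected t₀ t₁
  obtain ⟨s, s', hss', hs, hs', hs't₁⟩ :=
    p.toPath.2.isTrail.exists_boundary_edge (U := {t | u ∈ bag t}) h₀
      fun h => huv ⟨t₁, h, h₁⟩
  have hbridge : ¬ (T.deleteEdges {s(s, s')}).Reachable s s' :=
    isAcyclic_iff_forall_adj_isBridge.mp hT.acyclic hss'
  refine ⟨s, fun w ⟨huw, hvw⟩ => by_contra fun hws => hbridge ?_⟩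
  obtain ⟨x, hux, hwx⟩ := hT.edge_cover huw
  obtain ⟨y, hvy, hwy⟩ := hT.edge_cover hvw
  have hsx : (T.deleteEdges {s(s, s')}).Reachable s x := by
    rw [Sym2.eq_swap]
    exact reachable_deleteEdges_of_induce_connected (hT.vert_conn u) hs hux hs'
  exact hsx.trans <|
    (reachable_deleteEdges_of_induce_connected (hT.vert_conn w) hwx hwy hws).trans <|
    (reachable_deleteEdges_of_induce_connected (hT.vert_conn v) hvy h₁
      fun h => huv ⟨s, hs, h⟩).trans hs't₁.symm

lemma IsTreeDecomp.sup_edge (hT : IsTreeDecomp G T bag) {u v : V}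
    (huv : ∃ t, u ∈ bag t ∧ v ∈ bag t) : IsTreeDecomp (G ⊔ edge u v) T bag where
  __ := hT
  edge_cover x y hxy := by
    rcases hxy with hxy | hxy
    · exact hT.edge_cover hxy
    · obtain ⟨t, hu, hv⟩ := huv
      obtain ⟨⟨rfl, rfl⟩ | ⟨rfl, rfl⟩, -⟩ := (edge_adj _ _ _ _).mp hxy
      exacts [⟨t, hu, hv⟩, ⟨t, hv, hu⟩]

end TreeDecomp

lemma IsSeparator.sup_edge {V : Type*} {G : SimpleGraph V} {A B S : Set V}
    (hS : IsSeparator G A B S) {u v w : V} (huw : G.Adj u w) (hvw : G.Adj v w) (hw : w ∉ S) :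
    IsSeparator (G ⊔ edge u v) A B S := by
  refine ⟨hS.1, fun a ha b hb p => ?_⟩
  obtain ⟨q, hq⟩ := Walk.exists_walk_of_sup_edge huw hvw p
  obtain ⟨x, hxq, hxS⟩ := hS.2 a ha b hb q
  obtain hxp | rfl := hq x hxq
  exacts [⟨x, hxp, hxS⟩, absurd hxS hw]

lemma gaif_union (E F : Set (Set V)) : gaif (E ∪ F) = gaif E ⊔ gaif F := by
  ext x y
  simp only [gaif, sup_adj, fromRel_adj, mem_union]
  grind

lemma gaif_singleton_pair (u v : V) : gaif {{u, v}} = edge u v := by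
  ext x y
  simp only [gaif, edge_adj, fromRel_adj, mem_singleton_iff, exists_eq_left, mem_insert_iff]
  grind

lemma WellBehaved.not_subset_of_le_of_lt {lam : Set (Set V) → Set V → ℚ} (hl : WellBehaved lam)
    {E : Set (Set V)} {W X : Set V} {k : ℚ} (hX : lam E X ≤ k) (hW : k < lam E W) : ¬ W ⊆ X :=
  fun h => (hW.trans_le (hl.mono E E W X subset_rfl h)).not_ge hX

theorem stmt_17_general {V : Type} (lam : Set (Set V) → Set V → ℚ)
    (hl : WellBehaved lam) (E : Set (Set V)) (k : ℚ)
    (ℓ : ℕ) (Es : ℕ → Set (Set V)) (h0 : Es 0 = E)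
    (hstep : ∀ i < ℓ, ∃ u v : V, u ≠ v ∧ ¬ (gaif (Es i)).Adj u v ∧
      k < lam E ({w | (gaif (Es i)).Adj u w} ∩ {w | (gaif (Es i)).Adj v w}) ∧
      Es (i + 1) = Es i ∪ {{u, v}}) :
    (∀ (ι : Type) (T : SimpleGraph ι) (bag : ι → Set V),
      IsTreeDecomp (gaif E) T bag → (∀ t, lam E (bag t) ≤ k) →
      IsTreeDecomp (gaif (Es ℓ)) T bag) ∧
    (∀ A B S : Set V, IsSeparator (gaif E) A B S → lam E S ≤ k →
      ∀ i ≤ ℓ, IsSeparator (gaif (Es i)) A B S) := by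
  constructor
  · intro ι T bag hTD hk
    suffices ∀ i ≤ ℓ, IsTreeDecomp (gaif (Es i)) T bag from this ℓ le_rfl
    intro i hi
    induction i with
    | zero => rwa [h0]
    | succ i ih =>
      obtain ⟨u, v, -, -, hW, hEs⟩ := hstep i hi
      have hTDi := ih (by omega)
      rw [hEs, gaif_union, gaif_singleton_pair]
      refine hTDi.sup_edge (by_contra fun huv => ?_)
      obtain ⟨t, ht⟩ := hTDi.exists_commonNeighbors_subset_bag huv
      exact hl.not_subset_of_le_of_lt (hk t) hW ht
  · intro A B S hsep hS i hi
    induction i with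
    | zero => rwa [h0]
    | succ i ih =>
      obtain ⟨u, v, -, -, hW, hEs⟩ := hstep i hi
      obtain ⟨w, ⟨huw, hvw⟩, hwS⟩ := not_subset.mp (hl.not_subset_of_le_of_lt hS hW)
      rw [hEs, gaif_union, gaif_singleton_pair]
      exact (ih (by omega)).sup_edge huw hvw hwS

/-- adding edges between nonadjacent vertices whose common Gaifman
neighbourhood has `λ`-value above `k` preserves tree decompositions of width `≤ k`
and `(A,B)`-separators of `λ`-value `≤ k`. -/
theorem stmt_17 {V : Type} [Fintype V] (lam : Set (Set V) → Set V → ℚ)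
    (hl : WellBehaved lam) (E : Set (Set V)) (k : ℚ)
    (htw : ∃ (ι : Type) (T : SimpleGraph ι) (bag : ι → Set V),
      IsTreeDecomp (gaif E) T bag ∧ ∀ t, lam E (bag t) ≤ k)
    (ℓ : ℕ) (Es : ℕ → Set (Set V)) (h0 : Es 0 = E)
    (hstep : ∀ i < ℓ, ∃ u v : V, u ≠ v ∧ ¬ (gaif (Es i)).Adj u v ∧
      k < lam E ({w | (gaif (Es i)).Adj u w} ∩ {w | (gaif (Es i)).Adj v w}) ∧
      Es (i + 1) = Es i ∪ {{u, v}}) :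
    (∀ (ι : Type) (T : SimpleGraph ι) (bag : ι → Set V),
      IsTreeDecomp (gaif E) T bag → (∀ t, lam E (bag t) ≤ k) →
      IsTreeDecomp (gaif (Es ℓ)) T bag) ∧
    (∀ A B S : Set V, IsSeparator (gaif E) A B S → lam E S ≤ k →
      ∀ i ≤ ℓ, IsSeparator (gaif (Es i)) A B S) :=
  stmt_17_general lam hl E k ℓ Es h0 hstep
end
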